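/- arXiv:0912.3452 — 5 statements merged into one kernel-verified Lean document; each statement's English description precedes it below -/
import Mathlib

section
/- Let H be a Hopf quasigroup with antipode S. Then the right Galois map β : H⊗H → H⊗H, g⊗h ↦ gh₍₁₎⊗h₍₂₎, is bijective with inverse the map β⁻¹ : g⊗h ↦ gSh₍₁₎ ⊗ h₍₂₎, and this inverse is almost left H-linear (i.e. β⁻¹(g⊗h) = (g⊗1)·β⁻¹(1⊗h) for all g,h ∈ H, with the componentwise product on H⊗H). -/
open TensorProduct

noncomputable section

/-- The componentwise product on `H ⊗[k] H` induced by a bilinear multiplication on `H`: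
`(a ⊗ b) * (c ⊗ d) = a c ⊗ b d`. -/
def tmul2 (k : Type*) [Field k] (H : Type*) [AddCommGroup H] [Module k H]
    (mul : H →ₗ[k] H →ₗ[k] H) :
    H ⊗[k] H →ₗ[k] H ⊗[k] H →ₗ[k] H ⊗[k] H :=
  TensorProduct.curry
    ((TensorProduct.map (TensorProduct.lift mul) (TensorProduct.lift mul)).comp
      (TensorProduct.tensorTensorTensorComm k H H H H).toLinearMap)

/-- The common setup: a (not necessarily associative) unital algebra `H` with a
(not necessarily coassociative) counital coalgebra structure, such that the coproduct
and the counit are multiplicative and unital. -/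
structure BialgQ (k : Type*) [Field k] (H : Type*) [AddCommGroup H] [Module k H] where
  /-- the (bilinear, not necessarily associative) multiplication -/
  mul : H →ₗ[k] H →ₗ[k] H
  /-- the unit element -/
  one : H
  /-- the (not necessarily coassociative) comultiplication -/
  comul : H →ₗ[k] H ⊗[k] H
  /-- the counit -/
  counit : H →ₗ[k] k
  one_mul : ∀ h, mul one h = h
  mul_one : ∀ h, mul h one = h
  /-- counit law `(ε ⊗ id) ∘ Δ = id` -/
  counit_comul : ∀ h,
    TensorProduct.lid k H (TensorProduct.map counit LinearMap.id (comul h)) = h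
  /-- counit law `(id ⊗ ε) ∘ Δ = id` -/
  comul_counit : ∀ h,
    TensorProduct.rid k H (TensorProduct.map LinearMap.id counit (comul h)) = h
  /-- `Δ` is multiplicative -/
  comul_mul : ∀ g h, comul (mul g h) = tmul2 k H mul (comul g) (comul h)
  /-- `Δ` is unital -/
  comul_one : comul one = one ⊗ₜ[k] one
  /-- `ε` is multiplicative -/
  counit_mul : ∀ g h, counit (mul g h) = counit g * counit h
  /-- `ε` is unital -/
  counit_one : counit one = 1

namespace BialgQ

variable {k : Type*} [Field k] {H : Type*} [AddCommGroup H] [Module k H] (D : BialgQ k H)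

/-- The multiplication as a linear map on the tensor product. -/
def mulMap : H ⊗[k] H →ₗ[k] H := TensorProduct.lift D.mul

/-- The right Galois map `β : g ⊗ h ↦ g h₍₁₎ ⊗ h₍₂₎`. -/
def rGalois : H ⊗[k] H →ₗ[k] H ⊗[k] H :=
  (TensorProduct.map D.mulMap LinearMap.id).comp
    (((TensorProduct.assoc k H H H).symm.toLinearMap).comp
      (TensorProduct.map LinearMap.id D.comul))

/-- The left Galois map `γ : g ⊗ h ↦ g₍₁₎ ⊗ g₍₂₎ h`. -/
def lGalois : H ⊗[k] H →ₗ[k] H ⊗[k] H :=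
  (TensorProduct.map LinearMap.id D.mulMap).comp
    (((TensorProduct.assoc k H H H).toLinearMap).comp
      (TensorProduct.map D.comul LinearMap.id))

/-- `φ` is almost left `H`-linear: `φ(g ⊗ h) = (g ⊗ 1) · φ(1 ⊗ h)`. -/
def AlmostLeftLinear (φ : H ⊗[k] H →ₗ[k] H ⊗[k] H) : Prop :=
  ∀ g h : H, φ (g ⊗ₜ[k] h) = tmul2 k H D.mul (g ⊗ₜ[k] D.one) (φ (D.one ⊗ₜ[k] h))

/-- `φ` is almost right `H`-linear: `φ(g ⊗ h) = φ(g ⊗ 1) · (1 ⊗ h)`. -/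
def AlmostRightLinear (φ : H ⊗[k] H →ₗ[k] H ⊗[k] H) : Prop :=
  ∀ g h : H, φ (g ⊗ₜ[k] h) = tmul2 k H D.mul (φ (g ⊗ₜ[k] D.one)) (D.one ⊗ₜ[k] h)

/-- `φ` is almost right `H`-colinear: `φ(g ⊗ h) = (id ⊗ ε)(φ(g ⊗ h₍₁₎)) ⊗ h₍₂₎`. -/
def AlmostRightColinear (φ : H ⊗[k] H →ₗ[k] H ⊗[k] H) : Prop :=
  ∀ g h : H, φ (g ⊗ₜ[k] h) =
    TensorProduct.map
      ((TensorProduct.rid k H).toLinearMap.comp (TensorProduct.map LinearMap.id D.counit))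
      LinearMap.id
      (TensorProduct.map φ LinearMap.id
        ((TensorProduct.assoc k H H H).symm (g ⊗ₜ[k] D.comul h)))

/-- `φ` is almost left `H`-colinear: `φ(g ⊗ h) = g₍₁₎ ⊗ (ε ⊗ id)(φ(g₍₂₎ ⊗ h))`. -/
def AlmostLeftColinear (φ : H ⊗[k] H →ₗ[k] H ⊗[k] H) : Prop :=
  ∀ g h : H, φ (g ⊗ₜ[k] h) =
    TensorProduct.map LinearMap.id
      ((TensorProduct.lid k H).toLinearMap.comp (TensorProduct.map D.counit LinearMap.id))
      (TensorProduct.map LinearMap.id φ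
        ((TensorProduct.assoc k H H H) (D.comul g ⊗ₜ[k] h)))

/-- The candidate inverse `g ⊗ h ↦ g S(h₍₁₎) ⊗ h₍₂₎` of the right Galois map, built
from a linear map `S : H → H`. -/
def betaInvOf (S : H →ₗ[k] H) : H ⊗[k] H →ₗ[k] H ⊗[k] H :=
  (TensorProduct.map (D.mulMap.comp (TensorProduct.map LinearMap.id S)) LinearMap.id).comp
    (((TensorProduct.assoc k H H H).symm.toLinearMap).comp
      (TensorProduct.map LinearMap.id D.comul))

/-- The candidate inverse `g ⊗ h ↦ g₍₁₎ ⊗ (S g₍₂₎) h` of the left Galois map, built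
from a linear map `S : H → H`. -/
def gammaInvOf (S : H →ₗ[k] H) : H ⊗[k] H →ₗ[k] H ⊗[k] H :=
  (TensorProduct.map LinearMap.id (D.mulMap.comp (TensorProduct.map S LinearMap.id))).comp
    (((TensorProduct.assoc k H H H).toLinearMap).comp
      (TensorProduct.map D.comul LinearMap.id))

/-- The antipode produced from an inverse `φ` of the right Galois map:
`S h = (id ⊗ ε)(φ(1 ⊗ h))`. -/
def antipodeOf (φ : H ⊗[k] H →ₗ[k] H ⊗[k] H) : H →ₗ[k] H :=
  ((TensorProduct.rid k H).toLinearMap.comp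
    ((TensorProduct.map LinearMap.id D.counit).comp
      (φ.comp (TensorProduct.mk k H H D.one))))

end BialgQ

/-- A Hopf quasigroup. -/
structure HopfQuasigroup (k : Type*) [Field k] (H : Type*) [AddCommGroup H] [Module k H]
    extends BialgQ k H where
  /-- `Δ` is coassociative -/
  coassoc : ∀ h, TensorProduct.assoc k H H H
      (TensorProduct.map comul LinearMap.id (comul h)) =
    TensorProduct.map LinearMap.id comul (comul h)
  /-- the antipode -/
  S : H →ₗ[k] H
  /-- `(S h₍₁₎)(h₍₂₎ g) = ε(h) g` -/
  antipode₁ : ∀ h g, TensorProduct.lift mul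
      (TensorProduct.map S (TensorProduct.lift mul)
        (TensorProduct.assoc k H H H (comul h ⊗ₜ[k] g))) = counit h • g
  /-- `h₍₁₎((S h₍₂₎) g) = ε(h) g` -/
  antipode₂ : ∀ h g, TensorProduct.lift mul
      (TensorProduct.map LinearMap.id
        ((TensorProduct.lift mul).comp (TensorProduct.map S LinearMap.id))
        (TensorProduct.assoc k H H H (comul h ⊗ₜ[k] g))) = counit h • g
  /-- `(g h₍₁₎) S h₍₂₎ = ε(h) g` -/
  antipode₃ : ∀ g h, TensorProduct.lift mul
      (TensorProduct.map (TensorProduct.lift mul) S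
        ((TensorProduct.assoc k H H H).symm (g ⊗ₜ[k] comul h))) = counit h • g
  /-- `(g S h₍₁₎) h₍₂₎ = ε(h) g` -/
  antipode₄ : ∀ g h, TensorProduct.lift mul
      (TensorProduct.map ((TensorProduct.lift mul).comp (TensorProduct.map LinearMap.id S))
        LinearMap.id
        ((TensorProduct.assoc k H H H).symm (g ⊗ₜ[k] comul h))) = counit h • g

/-- A Hopf coquasigroup. -/
structure HopfCoquasigroup (k : Type*) [Field k] (H : Type*) [AddCommGroup H] [Module k H]
    extends BialgQ k H where
  /-- the multiplication is associative -/
  mul_assoc : ∀ g h l, mul (mul g h) l = mul g (mul h l)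
  /-- the antipode -/
  S : H →ₗ[k] H
  /-- `(S h₍₁₎) h₍₂₎₍₁₎ ⊗ h₍₂₎₍₂₎ = 1 ⊗ h` -/
  coantipode₁ : ∀ h,
    TensorProduct.map ((TensorProduct.lift mul).comp (TensorProduct.map S LinearMap.id))
      LinearMap.id
      ((TensorProduct.assoc k H H H).symm
        (TensorProduct.map LinearMap.id comul (comul h))) = one ⊗ₜ[k] h
  /-- `h₍₁₎ S(h₍₂₎₍₁₎) ⊗ h₍₂₎₍₂₎ = 1 ⊗ h` -/
  coantipode₂ : ∀ h,
    TensorProduct.map ((TensorProduct.lift mul).comp (TensorProduct.map LinearMap.id S))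
      LinearMap.id
      ((TensorProduct.assoc k H H H).symm
        (TensorProduct.map LinearMap.id comul (comul h))) = one ⊗ₜ[k] h
  /-- `h₍₁₎₍₁₎ ⊗ h₍₁₎₍₂₎ S h₍₂₎ = h ⊗ 1` -/
  coantipode₃ : ∀ h,
    TensorProduct.map LinearMap.id
      ((TensorProduct.lift mul).comp (TensorProduct.map LinearMap.id S))
      (TensorProduct.assoc k H H H
        (TensorProduct.map comul LinearMap.id (comul h))) = h ⊗ₜ[k] one
  /-- `h₍₁₎₍₁₎ ⊗ (S h₍₁₎₍₂₎) h₍₂₎ = h ⊗ 1` -/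
  coantipode₄ : ∀ h,
    TensorProduct.map LinearMap.id
      ((TensorProduct.lift mul).comp (TensorProduct.map S LinearMap.id))
      (TensorProduct.assoc k H H H
        (TensorProduct.map comul LinearMap.id (comul h))) = h ⊗ₜ[k] one

namespace HopfQuasigroup

variable {k : Type*} [Field k] {H : Type*} [AddCommGroup H] [Module k H]
  (Q : HopfQuasigroup k H)

/-- `M` is a right `H`-Hopf module over the Hopf quasigroup `Q`, with (bilinear, unital)
action `act` and (coassociative, counital) coaction `ρ`, satisfying
`(m·h₍₁₎)·Sh₍₂₎ = ε(h) m = (m·Sh₍₁₎)·h₍₂₎` and `ρ(m·h) = m₍₀₎·h₍₁₎ ⊗ m₍₁₎h₍₂₎`. -/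
def IsHopfModule {M : Type*} [AddCommGroup M] [Module k M]
    (act : M ⊗[k] H →ₗ[k] M) (ρ : M →ₗ[k] M ⊗[k] H) : Prop :=
  (∀ m, act (m ⊗ₜ[k] Q.one) = m) ∧
  (∀ m, TensorProduct.assoc k M H H (TensorProduct.map ρ LinearMap.id (ρ m)) =
      TensorProduct.map LinearMap.id Q.comul (ρ m)) ∧
  (∀ m, TensorProduct.rid k M (TensorProduct.map LinearMap.id Q.counit (ρ m)) = m) ∧
  (∀ m h, act (TensorProduct.map act Q.S
      ((TensorProduct.assoc k M H H).symm (m ⊗ₜ[k] Q.comul h))) = Q.counit h • m) ∧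
  (∀ m h, act (TensorProduct.map (act.comp (TensorProduct.map LinearMap.id Q.S)) LinearMap.id
      ((TensorProduct.assoc k M H H).symm (m ⊗ₜ[k] Q.comul h))) = Q.counit h • m) ∧
  (∀ m h, ρ (act (m ⊗ₜ[k] h)) =
      TensorProduct.map act (TensorProduct.lift Q.mul)
        (TensorProduct.tensorTensorTensorComm k M H H H (ρ m ⊗ₜ[k] Q.comul h)))

/-- `m ↦ (m₍₀₎ · S m₍₁₎) ⊗ m₍₂₎`. -/
def coinvPart {M : Type*} [AddCommGroup M] [Module k M]
    (act : M ⊗[k] H →ₗ[k] M) (ρ : M →ₗ[k] M ⊗[k] H) : M →ₗ[k] M ⊗[k] H :=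
  (TensorProduct.map (act.comp (TensorProduct.map LinearMap.id Q.S)) LinearMap.id).comp
    ((TensorProduct.map ρ LinearMap.id).comp ρ)

/-- The induced action `m ⊳ h = (m₍₀₎ · S m₍₁₎) · (m₍₂₎ h)` of a right Hopf module. -/
def inducedAct {M : Type*} [AddCommGroup M] [Module k M]
    (act : M ⊗[k] H →ₗ[k] M) (ρ : M →ₗ[k] M ⊗[k] H) : M ⊗[k] H →ₗ[k] M :=
  act.comp ((TensorProduct.map LinearMap.id (TensorProduct.lift Q.mul)).comp
    (((TensorProduct.assoc k M H H).toLinearMap).comp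
      (TensorProduct.map (Q.coinvPart act ρ) LinearMap.id)))

/-- The free action `(m ⊗ h) · g = m ⊗ h g` on `M ⊗ H`. -/
def freeAct (M : Type*) [AddCommGroup M] [Module k M] :
    (M ⊗[k] H) ⊗[k] H →ₗ[k] M ⊗[k] H :=
  (TensorProduct.map LinearMap.id (TensorProduct.lift Q.mul)).comp
    (TensorProduct.assoc k M H H).toLinearMap

/-- The coaction `id ⊗ Δ : m ⊗ h ↦ m ⊗ h₍₁₎ ⊗ h₍₂₎` on `M ⊗ H`. -/
def freeCoact (M : Type*) [AddCommGroup M] [Module k M] :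
    M ⊗[k] H →ₗ[k] (M ⊗[k] H) ⊗[k] H :=
  ((TensorProduct.assoc k M H H).symm.toLinearMap).comp
    (TensorProduct.map LinearMap.id Q.comul)

/-- The diagonal action `(m ⊗ h) · g = m · g₍₁₎ ⊗ h g₍₂₎` on `M ⊗ H`. -/
def diagAct {M : Type*} [AddCommGroup M] [Module k M]
    (act : M ⊗[k] H →ₗ[k] M) : (M ⊗[k] H) ⊗[k] H →ₗ[k] M ⊗[k] H :=
  (TensorProduct.map act (TensorProduct.lift Q.mul)).comp
    (((TensorProduct.tensorTensorTensorComm k M H H H).toLinearMap).comp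
      (TensorProduct.map LinearMap.id Q.comul))

/-- The coinvariants `M^{coH} = {m | ρ(m) = m ⊗ 1}` of a right `H`-comodule. -/
def coinvariants {M : Type*} [AddCommGroup M] [Module k M]
    (ρ : M →ₗ[k] M ⊗[k] H) : Submodule k M :=
  LinearMap.ker (ρ - (TensorProduct.mk k M H).flip Q.one)

end HopfQuasigroup

namespace HopfCoquasigroup

variable {k : Type*} [Field k] {H : Type*} [AddCommGroup H] [Module k H]
  (Q : HopfCoquasigroup k H)

/-- `M` is a right `H`-Hopf module over the Hopf coquasigroup `Q`, with (bilinear,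
associative, unital) action `act` and (counital, not necessarily coassociative)
coaction `ρ`, satisfying `m₍₀₎₍₀₎ ⊗ m₍₀₎₍₁₎ S m₍₁₎ = m ⊗ 1 = m₍₀₎₍₀₎ ⊗ (S m₍₀₎₍₁₎) m₍₁₎`
and `ρ(m·h) = m₍₀₎·h₍₁₎ ⊗ m₍₁₎h₍₂₎`. -/
def IsHopfModule {M : Type*} [AddCommGroup M] [Module k M]
    (act : M ⊗[k] H →ₗ[k] M) (ρ : M →ₗ[k] M ⊗[k] H) : Prop :=
  (∀ m, act (m ⊗ₜ[k] Q.one) = m) ∧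
  (∀ m g h, act (act (m ⊗ₜ[k] g) ⊗ₜ[k] h) = act (m ⊗ₜ[k] Q.mul g h)) ∧
  (∀ m, TensorProduct.rid k M (TensorProduct.map LinearMap.id Q.counit (ρ m)) = m) ∧
  (∀ m, TensorProduct.map LinearMap.id
      ((TensorProduct.lift Q.mul).comp (TensorProduct.map LinearMap.id Q.S))
      (TensorProduct.assoc k M H H (TensorProduct.map ρ LinearMap.id (ρ m)))
      = m ⊗ₜ[k] Q.one) ∧
  (∀ m, TensorProduct.map LinearMap.id
      ((TensorProduct.lift Q.mul).comp (TensorProduct.map Q.S LinearMap.id))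
      (TensorProduct.assoc k M H H (TensorProduct.map ρ LinearMap.id (ρ m)))
      = m ⊗ₜ[k] Q.one) ∧
  (∀ m h, ρ (act (m ⊗ₜ[k] h)) =
      TensorProduct.map act (TensorProduct.lift Q.mul)
        (TensorProduct.tensorTensorTensorComm k M H H H (ρ m ⊗ₜ[k] Q.comul h)))

/-- The induced coaction `λ(m) = ((m₍₀₎₍₀₎ · S m₍₀₎₍₁₎) · m₍₁₎₍₁₎) ⊗ m₍₁₎₍₂₎`. -/
def inducedCoact {M : Type*} [AddCommGroup M] [Module k M]
    (act : M ⊗[k] H →ₗ[k] M) (ρ : M →ₗ[k] M ⊗[k] H) : M →ₗ[k] M ⊗[k] H :=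
  (TensorProduct.map act LinearMap.id).comp
    (((TensorProduct.assoc k M H H).symm.toLinearMap).comp
      ((TensorProduct.map (act.comp (TensorProduct.map LinearMap.id Q.S)) LinearMap.id).comp
        ((TensorProduct.map ρ Q.comul).comp ρ)))

end HopfCoquasigroup

/-!
Both `β` and `β⁻¹ : g ⊗ h ↦ g S(h₍₁₎) ⊗ h₍₂₎` have the shape `x ⊗ h ↦ f(x ⊗ h₍₁₎) ⊗ h₍₂₎`,
and by coassociativity two such maps compose to the map of the same shape built from
`x ⊗ h ↦ g(f(x ⊗ h₍₁₎) ⊗ h₍₂₎)`. For `β⁻¹ ∘ β` and `β ∘ β⁻¹` this is `(x h₍₁₎) S h₍₂₎` resp.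
`(x S h₍₁₎) h₍₂₎`, i.e. `ε(h) x` by the antipode axioms, and the map built from
`x ⊗ h ↦ ε(h) x` is the identity by the counit law. Almost left linearity only uses that `1`
is a left unit.
-/

namespace BialgQ

variable {k : Type*} [Field k] {H : Type*} [AddCommGroup H] [Module k H] (D : BialgQ k H)

/-- `x ⊗ h ↦ f(x ⊗ h₍₁₎) ⊗ h₍₂₎` -/
def rGaloisOf (f : H ⊗[k] H →ₗ[k] H) : H ⊗[k] H →ₗ[k] H ⊗[k] H :=
  (TensorProduct.map f LinearMap.id).comp
    (((TensorProduct.assoc k H H H).symm.toLinearMap).comp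
      (TensorProduct.map LinearMap.id D.comul))

/-- `x ⊗ h ↦ ε(h) x` -/
def counitSMul : H ⊗[k] H →ₗ[k] H :=
  (TensorProduct.rid k H).toLinearMap ∘ₗ TensorProduct.map LinearMap.id D.counit

theorem rGalois_eq_rGaloisOf : D.rGalois = D.rGaloisOf D.mulMap := rfl

theorem betaInvOf_eq_rGaloisOf (S : H →ₗ[k] H) :
    D.betaInvOf S = D.rGaloisOf (D.mulMap ∘ₗ TensorProduct.map LinearMap.id S) := rfl

theorem rGaloisOf_tmul (f : H ⊗[k] H →ₗ[k] H) (x h : H) :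
    D.rGaloisOf f (x ⊗ₜ h) =
      TensorProduct.map f LinearMap.id ((TensorProduct.assoc k H H H).symm (x ⊗ₜ D.comul h)) :=
  rfl

theorem rGaloisOf_comp_rGaloisOf
    (coassoc : ∀ h,
      TensorProduct.assoc k H H H (TensorProduct.map D.comul LinearMap.id (D.comul h)) =
        TensorProduct.map LinearMap.id D.comul (D.comul h))
    (f g : H ⊗[k] H →ₗ[k] H) :
    D.rGaloisOf g ∘ₗ D.rGaloisOf f = D.rGaloisOf (g ∘ₗ D.rGaloisOf f) := by
  refine TensorProduct.ext' fun x h => ?_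
  -- both sides are `Ψ` applied to the two sides of the coassociativity identity for `Δ h`
  let Ψ : H ⊗[k] (H ⊗[k] H) →ₗ[k] H ⊗[k] H :=
    TensorProduct.map g LinearMap.id ∘ₗ (TensorProduct.assoc k H H H).symm.toLinearMap ∘ₗ
      TensorProduct.map (f ∘ₗ TensorProduct.mk k H H x) LinearMap.id
  have lhs : ∀ v, D.rGaloisOf g (TensorProduct.map f LinearMap.id
      ((TensorProduct.assoc k H H H).symm (x ⊗ₜ v))) =
        Ψ (TensorProduct.map LinearMap.id D.comul v) := by
    intro v
    induction v using TensorProduct.induction_on with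
    | zero => simp
    | tmul a b => rfl
    | add v w hv hw => simp only [tmul_add, map_add, hv, hw]
  have rhs_tmul : ∀ w b, g (TensorProduct.map f LinearMap.id
      ((TensorProduct.assoc k H H H).symm (x ⊗ₜ w))) ⊗ₜ b =
        Ψ (TensorProduct.assoc k H H H (w ⊗ₜ b)) := by
    intro w b
    induction w using TensorProduct.induction_on with
    | zero => simp
    | tmul a c => rfl
    | add v w hv hw => simp only [tmul_add, add_tmul, map_add, hv, hw]
  have rhs : ∀ v, TensorProduct.map (g ∘ₗ D.rGaloisOf f) LinearMap.id
      ((TensorProduct.assoc k H H H).symm (x ⊗ₜ v)) =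
      Ψ (TensorProduct.assoc k H H H (TensorProduct.map D.comul LinearMap.id v)) := by
    intro v
    induction v using TensorProduct.induction_on with
    | zero => simp
    | tmul a b => exact rhs_tmul _ b
    | add v w hv hw => simp only [tmul_add, map_add, hv, hw]
  rw [LinearMap.comp_apply, rGaloisOf_tmul, rGaloisOf_tmul, lhs, rhs, coassoc]

theorem rGaloisOf_counitSMul : D.rGaloisOf D.counitSMul = LinearMap.id := by
  refine TensorProduct.ext' fun x h => ?_
  have key : ∀ v, TensorProduct.map D.counitSMul LinearMap.id
      ((TensorProduct.assoc k H H H).symm (x ⊗ₜ v)) =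
      x ⊗ₜ TensorProduct.lid k H (TensorProduct.map D.counit LinearMap.id v) := by
    intro v
    induction v using TensorProduct.induction_on with
    | zero => simp
    | tmul a b => simp [counitSMul, TensorProduct.smul_tmul]
    | add v w hv hw => simp only [tmul_add, map_add, hv, hw]
  rw [rGaloisOf_tmul, key, D.counit_comul, LinearMap.id_apply]

theorem betaInvOf_almostLeftLinear (S : H →ₗ[k] H) : D.AlmostLeftLinear (D.betaInvOf S) := by
  intro g h
  rw [betaInvOf_eq_rGaloisOf, rGaloisOf_tmul, rGaloisOf_tmul]
  induction D.comul h using TensorProduct.induction_on with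
  | zero => simp
  | tmul a b => simp [tmul2, mulMap, D.one_mul]
  | add v w hv hw => simp only [tmul_add, map_add, hv, hw]

end BialgQ

namespace HopfQuasigroup

variable {k : Type*} [Field k] {H : Type*} [AddCommGroup H] [Module k H]
  (Q : HopfQuasigroup k H)

theorem mulMap_comp_betaInvOf :
    Q.mulMap ∘ₗ Q.betaInvOf Q.S = Q.counitSMul :=
  TensorProduct.ext' fun g h => (Q.antipode₄ g h).trans (by simp [BialgQ.counitSMul])

theorem mulMap_comp_antipode_comp_rGalois :
    (Q.mulMap ∘ₗ TensorProduct.map LinearMap.id Q.S) ∘ₗ Q.rGalois = Q.counitSMul := by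
  refine TensorProduct.ext' fun g h => ?_
  have map_comp_map :
      TensorProduct.map LinearMap.id Q.S ∘ₗ TensorProduct.map Q.mulMap LinearMap.id =
        TensorProduct.map Q.mulMap Q.S := by
    rw [← TensorProduct.map_comp, LinearMap.id_comp, LinearMap.comp_id]
  exact (congrArg Q.mulMap (LinearMap.congr_fun map_comp_map _)).trans
    ((Q.antipode₃ g h).trans (by simp [BialgQ.counitSMul]))

end HopfQuasigroup

/-- For a Hopf quasigroup, the right Galois map `β` is bijective with inverse
`β⁻¹ : g ⊗ h ↦ g S(h₍₁₎) ⊗ h₍₂₎`, and this inverse is almost left `H`-linear. -/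
theorem stmt3 {k : Type*} [Field k] {H : Type*} [AddCommGroup H] [Module k H]
    (Q : HopfQuasigroup k H) :
    Function.Bijective ⇑Q.toBialgQ.rGalois ∧
    (Q.toBialgQ.betaInvOf Q.S).comp Q.toBialgQ.rGalois = LinearMap.id ∧
    Q.toBialgQ.rGalois.comp (Q.toBialgQ.betaInvOf Q.S) = LinearMap.id ∧
    Q.toBialgQ.AlmostLeftLinear (Q.toBialgQ.betaInvOf Q.S) := by
  have left_inv : Q.betaInvOf Q.S ∘ₗ Q.rGalois = LinearMap.id := by
    rw [BialgQ.betaInvOf_eq_rGaloisOf, BialgQ.rGalois_eq_rGaloisOf,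
      Q.rGaloisOf_comp_rGaloisOf Q.coassoc, ← BialgQ.rGalois_eq_rGaloisOf,
      Q.mulMap_comp_antipode_comp_rGalois, BialgQ.rGaloisOf_counitSMul]
  have right_inv : Q.rGalois ∘ₗ Q.betaInvOf Q.S = LinearMap.id := by
    rw [BialgQ.rGalois_eq_rGaloisOf, BialgQ.betaInvOf_eq_rGaloisOf,
      Q.rGaloisOf_comp_rGaloisOf Q.coassoc, ← BialgQ.betaInvOf_eq_rGaloisOf,
      Q.mulMap_comp_betaInvOf, BialgQ.rGaloisOf_counitSMul]
  have bijective : Function.Bijective Q.rGalois := Function.bijective_iff_has_inverse.mpr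
    ⟨Q.betaInvOf Q.S, LinearMap.congr_fun left_inv, LinearMap.congr_fun right_inv⟩
  exact ⟨bijective, left_inv, right_inv, Q.betaInvOf_almostLeftLinear Q.S⟩
end
end

section
/- Let H be a Hopf quasigroup with antipode S. Then the left Galois map γ : H⊗H → H⊗H, g⊗h ↦ g₍₁₎⊗g₍₂₎h, is bijective with inverse the map γ⁻¹ : g⊗h ↦ g₍₁₎ ⊗ (Sg₍₂₎)h, and this inverse is almost right H-linear (i.e. γ⁻¹(g⊗h) = γ⁻¹(g⊗1)·(1⊗h) for all g,h ∈ H, with the componentwise product on H⊗H). -/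
open TensorProduct

noncomputable section

/-!
The left Galois map and its candidate inverse are both of the form
`g ⊗ m ↦ g₍₁₎ ⊗ F(g₍₂₎ ⊗ m)`. By coassociativity two such maps compose to another one, with
`F(g ⊗ h)` equal to `(S g₍₁₎)(g₍₂₎ h)` resp. `g₍₁₎((S g₍₂₎) h)`; the antipode axioms turn
both into `ε(g) h`, and by counitality the map with that `F` is the identity.
Almost right linearity only uses that `1` is a right unit.
-/

section ComulTwist

variable {k : Type*} [Field k] {H M N P : Type*} [AddCommGroup H] [Module k H]
  [AddCommGroup M] [Module k M] [AddCommGroup N] [Module k N] [AddCommGroup P] [Module k P]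

/-- `g ⊗ m ↦ g₍₁₎ ⊗ F(g₍₂₎ ⊗ m)` -/
def comulTwist (Δ : H →ₗ[k] H ⊗[k] H) (F : H ⊗[k] M →ₗ[k] N) : H ⊗[k] M →ₗ[k] H ⊗[k] N :=
  (TensorProduct.map LinearMap.id F).comp
    ((TensorProduct.assoc k H H M).toLinearMap.comp (TensorProduct.map Δ LinearMap.id))

theorem comulTwist_tmul (Δ : H →ₗ[k] H ⊗[k] H) (F : H ⊗[k] M →ₗ[k] N) (g : H) (m : M) :
    comulTwist Δ F (g ⊗ₜ m) = TensorProduct.map LinearMap.id F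
      (TensorProduct.assoc k H H M (Δ g ⊗ₜ m)) :=
  rfl

theorem comulTwist_comp_comulTwist {Δ : H →ₗ[k] H ⊗[k] H}
    (coassoc : ∀ h, TensorProduct.assoc k H H H (TensorProduct.map Δ LinearMap.id (Δ h)) =
      TensorProduct.map LinearMap.id Δ (Δ h))
    (F : H ⊗[k] N →ₗ[k] P) (G : H ⊗[k] M →ₗ[k] N) :
    (comulTwist Δ F).comp (comulTwist Δ G) = comulTwist Δ (F.comp (comulTwist Δ G)) := by
  refine TensorProduct.ext' fun g m => ?_
  -- `x ⊗ y ⊗ z ↦ x ⊗ F(y ⊗ G(z ⊗ m))`, applied to both bracketings of `g₍₁₎ ⊗ g₍₂₎ ⊗ g₍₃₎`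
  let Ψ : H ⊗[k] (H ⊗[k] H) →ₗ[k] H ⊗[k] P :=
    TensorProduct.map LinearMap.id (F.comp (TensorProduct.map LinearMap.id
      (G.comp ((TensorProduct.mk k H M).flip m))))
  have hL : ∀ t : H ⊗[k] H, comulTwist Δ F (TensorProduct.map LinearMap.id G
      (TensorProduct.assoc k H H M (t ⊗ₜ m))) =
      Ψ (TensorProduct.assoc k H H H (TensorProduct.map Δ LinearMap.id t)) := by
    intro t
    induction t using TensorProduct.induction_on with
    | zero => simp
    | add x y hx hy => simp only [map_add, add_tmul, hx, hy]
    | tmul a b =>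
      simp only [assoc_tmul, map_tmul, LinearMap.id_apply,
        comulTwist_tmul]
      induction Δ a using TensorProduct.induction_on with
      | zero => simp
      | add x y hx hy => simp only [map_add, add_tmul, hx, hy]
      | tmul c d => simp [Ψ]
  have hR : ∀ t : H ⊗[k] H, TensorProduct.map LinearMap.id (F.comp (comulTwist Δ G))
      (TensorProduct.assoc k H H M (t ⊗ₜ m)) = Ψ (TensorProduct.map LinearMap.id Δ t) := by
    intro t
    induction t using TensorProduct.induction_on with
    | zero => simp
    | add x y hx hy => simp only [map_add, add_tmul, hx, hy]
    | tmul a b =>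
      simp only [assoc_tmul, map_tmul, LinearMap.id_apply,
        LinearMap.comp_apply, comulTwist_tmul]
      induction Δ b using TensorProduct.induction_on with
      | zero => simp
      | add x y hx hy => simp only [map_add, add_tmul, tmul_add, hx, hy]
      | tmul c d => simp [Ψ]
  rw [LinearMap.comp_apply, comulTwist_tmul, comulTwist_tmul, hL, hR, coassoc]

theorem comulTwist_counit {Δ : H →ₗ[k] H ⊗[k] H} {ε : H →ₗ[k] k}
    (comul_counit : ∀ h,
      TensorProduct.rid k H (TensorProduct.map LinearMap.id ε (Δ h)) = h) :
    comulTwist Δ ((TensorProduct.lid k M).toLinearMap.comp (TensorProduct.map ε LinearMap.id))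
      = LinearMap.id := by
  refine TensorProduct.ext' fun g m => ?_
  conv_rhs => rw [LinearMap.id_apply, ← comul_counit g]
  rw [comulTwist_tmul]
  induction Δ g using TensorProduct.induction_on with
  | zero => simp
  | add x y hx hy => simp only [map_add, add_tmul, hx, hy]
  | tmul a b => simp [TensorProduct.smul_tmul]

end ComulTwist

namespace BialgQ

variable {k : Type*} [Field k] {H : Type*} [AddCommGroup H] [Module k H] (D : BialgQ k H)

theorem lGalois_eq_comulTwist : D.lGalois = comulTwist D.comul D.mulMap :=
  rfl

theorem gammaInvOf_eq_comulTwist (S : H →ₗ[k] H) :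
    D.gammaInvOf S = comulTwist D.comul (D.mulMap.comp (TensorProduct.map S LinearMap.id)) :=
  rfl

theorem almostRightLinear_gammaInvOf (S : H →ₗ[k] H) : D.AlmostRightLinear (D.gammaInvOf S) := by
  intro g h
  simp only [gammaInvOf_eq_comulTwist, comulTwist_tmul]
  induction D.comul g using TensorProduct.induction_on with
  | zero => simp
  | add x y hx hy => simp only [add_tmul, map_add, LinearMap.add_apply, hx, hy]
  | tmul a b => simp [mulMap, tmul2, D.mul_one]

end BialgQ

namespace HopfQuasigroup

variable {k : Type*} [Field k] {H : Type*} [AddCommGroup H] [Module k H] (Q : HopfQuasigroup k H)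

theorem gammaInvOf_comp_lGalois : (Q.gammaInvOf Q.S).comp Q.lGalois = LinearMap.id := by
  rw [Q.lGalois_eq_comulTwist, Q.gammaInvOf_eq_comulTwist,
    comulTwist_comp_comulTwist Q.coassoc, ← comulTwist_counit (M := H) Q.comul_counit]
  congr 1
  refine TensorProduct.ext' fun g h => ?_
  simpa [comulTwist_tmul, TensorProduct.map_map, BialgQ.mulMap] using Q.antipode₁ g h

theorem lGalois_comp_gammaInvOf : Q.lGalois.comp (Q.gammaInvOf Q.S) = LinearMap.id := by
  rw [Q.lGalois_eq_comulTwist, Q.gammaInvOf_eq_comulTwist,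
    comulTwist_comp_comulTwist Q.coassoc, ← comulTwist_counit (M := H) Q.comul_counit]
  congr 1
  refine TensorProduct.ext' fun g h => ?_
  simpa [comulTwist_tmul, BialgQ.mulMap] using Q.antipode₂ g h

end HopfQuasigroup

/-- For a Hopf quasigroup, the left Galois map `γ` is bijective with inverse
`γ⁻¹ : g ⊗ h ↦ g₍₁₎ ⊗ (S g₍₂₎) h`, and this inverse is almost right `H`-linear. -/
theorem stmt4 {k : Type*} [Field k] {H : Type*} [AddCommGroup H] [Module k H]
    (Q : HopfQuasigroup k H) :
    Function.Bijective ⇑Q.toBialgQ.lGalois ∧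
    (Q.toBialgQ.gammaInvOf Q.S).comp Q.toBialgQ.lGalois = LinearMap.id ∧
    Q.toBialgQ.lGalois.comp (Q.toBialgQ.gammaInvOf Q.S) = LinearMap.id ∧
    Q.toBialgQ.AlmostRightLinear (Q.toBialgQ.gammaInvOf Q.S) :=
  ⟨Function.bijective_iff_has_inverse.mpr ⟨Q.gammaInvOf Q.S,
      LinearMap.congr_fun Q.gammaInvOf_comp_lGalois, LinearMap.congr_fun Q.lGalois_comp_gammaInvOf⟩,
    Q.gammaInvOf_comp_lGalois, Q.lGalois_comp_gammaInvOf,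
    Q.almostRightLinear_gammaInvOf Q.S⟩
end
end

section
/- Let H be as in the given setup with Δ coassociative. Suppose the right Galois map β : g⊗h ↦ gh₍₁₎⊗h₍₂₎ has an almost left H-linear inverse and the left Galois map γ : g⊗h ↦ g₍₁₎⊗g₍₂₎h has an almost right H-linear inverse. Then H is a Hopf quasigroup; explicitly, the linear map S : H → H defined by Sh = (id⊗ε)(β⁻¹(1⊗h)) satisfies, for all g,h ∈ H: (Sh₍₁₎)(h₍₂₎g) = ε(h)g = h₍₁₎((Sh₍₂₎)g) and (gh₍₁₎)Sh₍₂₎ = gε(h) = (gSh₍₁₎)h₍₂₎. -/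
open TensorProduct

noncomputable section

/-!
Coassociativity makes the right Galois map `β` colinear for the coaction
`g ⊗ h ↦ g ⊗ h₍₁₎ ⊗ h₍₂₎`, hence so is `β⁻¹`; applying `id ⊗ ε ⊗ id` gives
`β⁻¹(1 ⊗ h) = S h₍₁₎ ⊗ h₍₂₎`, and almost left linearity then gives `β⁻¹(g ⊗ h) = g S h₍₁₎ ⊗ h₍₂₎`.
Since `(id ⊗ ε) ∘ β` is the multiplication and `(id ⊗ ε) ∘ β⁻¹` is `g ⊗ h ↦ g S h`, the identities
`β⁻¹ β = id = β β⁻¹` are the two right antipode laws.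

The left Galois map of `H` is the right Galois map of `H` with opposite multiplication and
co-opposite comultiplication, conjugated by the flip, so the same argument produces a map `S'`
satisfying the two left antipode laws. Finally `S' = S`, by evaluating `S' h₍₁₎ (h₍₂₎ S h₍₃₎)` in
two ways.
-/

namespace TensorProduct

variable {R M N P : Type*} [CommSemiring R] [AddCommMonoid M] [AddCommMonoid N]
  [AddCommMonoid P] [Module R M] [Module R N] [Module R P]

theorem assoc_symm_tmul_eq_rTensor_mk (m : M) (z : N ⊗[R] P) :
    (TensorProduct.assoc R M N P).symm (m ⊗ₜ z) = (TensorProduct.mk R M N m).rTensor P z := by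
  induction z using TensorProduct.induction_on with
  | zero => simp
  | tmul n p => rfl
  | add x y hx hy => simp only [tmul_add, map_add, hx, hy]

theorem assoc_tmul_eq_lTensor_mk (z : M ⊗[R] N) (p : P) :
    TensorProduct.assoc R M N P (z ⊗ₜ p) = ((TensorProduct.mk R N P).flip p).lTensor M z := by
  induction z using TensorProduct.induction_on with
  | zero => simp
  | tmul m n => rfl
  | add x y hx hy => simp only [add_tmul, map_add, hx, hy]

end TensorProduct

namespace BialgQ

variable {k : Type*} [Field k] {H : Type*} [AddCommGroup H] [Module k H] (D : BialgQ k H)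

def IsCoassoc : Prop :=
  ∀ h, TensorProduct.assoc k H H H (TensorProduct.map D.comul LinearMap.id (D.comul h)) =
    TensorProduct.map LinearMap.id D.comul (D.comul h)

/-- `(S h₍₁₎)(h₍₂₎ g) = ε(h) g = h₍₁₎((S h₍₂₎) g)` -/
def IsLeftAntipode (S : H →ₗ[k] H) : Prop :=
  (∀ h g, TensorProduct.lift D.mul
      (TensorProduct.map S (TensorProduct.lift D.mul)
        (TensorProduct.assoc k H H H (D.comul h ⊗ₜ[k] g))) = D.counit h • g) ∧
  (∀ h g, TensorProduct.lift D.mul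
      (TensorProduct.map LinearMap.id
        ((TensorProduct.lift D.mul).comp (TensorProduct.map S LinearMap.id))
        (TensorProduct.assoc k H H H (D.comul h ⊗ₜ[k] g))) = D.counit h • g)

/-- `(g h₍₁₎) S h₍₂₎ = ε(h) g = (g S h₍₁₎) h₍₂₎` -/
def IsRightAntipode (S : H →ₗ[k] H) : Prop :=
  (∀ g h, TensorProduct.lift D.mul
      (TensorProduct.map (TensorProduct.lift D.mul) S
        ((TensorProduct.assoc k H H H).symm (g ⊗ₜ[k] D.comul h))) = D.counit h • g) ∧
  (∀ g h, TensorProduct.lift D.mul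
      (TensorProduct.map
        ((TensorProduct.lift D.mul).comp (TensorProduct.map LinearMap.id S))
        LinearMap.id
        ((TensorProduct.assoc k H H H).symm (g ⊗ₜ[k] D.comul h))) = D.counit h • g)

def idCounit : H ⊗[k] H →ₗ[k] H :=
  (TensorProduct.rid k H).toLinearMap ∘ₗ D.counit.lTensor H

def counitId : H ⊗[k] H →ₗ[k] H :=
  (TensorProduct.lid k H).toLinearMap ∘ₗ D.counit.rTensor H

def rCoaction : H ⊗[k] H →ₗ[k] (H ⊗[k] H) ⊗[k] H :=
  (TensorProduct.assoc k H H H).symm.toLinearMap ∘ₗ D.comul.lTensor H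

@[simp] lemma idCounit_tmul (a b : H) : D.idCounit (a ⊗ₜ b) = D.counit b • a := rfl

@[simp] lemma counitId_tmul (a b : H) : D.counitId (a ⊗ₜ b) = D.counit a • b := rfl

@[simp] lemma mulMap_tmul (a b : H) : D.mulMap (a ⊗ₜ b) = D.mul a b := rfl

lemma idCounit_comul (h : H) : D.idCounit (D.comul h) = h := D.comul_counit h

lemma counitId_comul (h : H) : D.counitId (D.comul h) = h := D.counit_comul h

lemma idCounit_rTensor (f : H →ₗ[k] H) (z : H ⊗[k] H) :
    D.idCounit (f.rTensor H z) = f (D.idCounit z) := by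
  induction z using TensorProduct.induction_on with
  | zero => simp
  | tmul a b => simp
  | add x y hx hy => simp only [map_add, hx, hy]

lemma counitId_comm (z : H ⊗[k] H) :
    D.counitId (TensorProduct.comm k H H z) = D.idCounit z := by
  induction z using TensorProduct.induction_on with
  | zero => simp
  | tmul a b => simp
  | add x y hx hy => simp only [map_add, hx, hy]

lemma idCounit_comm (z : H ⊗[k] H) :
    D.idCounit (TensorProduct.comm k H H z) = D.counitId z := by
  rw [← D.counitId_comm, TensorProduct.comm_comm]

lemma rGalois_tmul (g h : H) : D.rGalois (g ⊗ₜ h) = (D.mul g).rTensor H (D.comul h) := by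
  rw [rGalois, LinearMap.comp_apply, LinearMap.comp_apply, map_tmul, LinearMap.id_apply,
    LinearEquiv.coe_coe, assoc_symm_tmul_eq_rTensor_mk, ← LinearMap.rTensor,
    ← LinearMap.rTensor_comp_apply]
  rfl

lemma lGalois_tmul (g h : H) : D.lGalois (g ⊗ₜ h) = (D.mul.flip h).lTensor H (D.comul g) := by
  rw [lGalois, LinearMap.comp_apply, LinearMap.comp_apply, map_tmul, LinearMap.id_apply,
    LinearEquiv.coe_coe, assoc_tmul_eq_lTensor_mk, ← LinearMap.lTensor,
    ← LinearMap.lTensor_comp_apply]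
  rfl

lemma betaInvOf_tmul (S : H →ₗ[k] H) (g h : H) :
    D.betaInvOf S (g ⊗ₜ h) = (D.mul g ∘ₗ S).rTensor H (D.comul h) := by
  rw [betaInvOf, LinearMap.comp_apply, LinearMap.comp_apply, map_tmul, LinearMap.id_apply,
    LinearEquiv.coe_coe, assoc_symm_tmul_eq_rTensor_mk, ← LinearMap.rTensor,
    ← LinearMap.rTensor_comp_apply]
  rfl

lemma tmul2_tmul_one (g : H) (z : H ⊗[k] H) :
    tmul2 k H D.mul (g ⊗ₜ D.one) z = (D.mul g).rTensor H z := by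
  induction z using TensorProduct.induction_on with
  | zero => simp
  | tmul a b => simp [tmul2, D.one_mul]
  | add x y hx hy => simp only [map_add, hx, hy]

lemma comm_tmul2 (mul : H →ₗ[k] H →ₗ[k] H) (x y : H ⊗[k] H) :
    TensorProduct.comm k H H (tmul2 k H mul x y) =
      tmul2 k H mul.flip (TensorProduct.comm k H H y) (TensorProduct.comm k H H x) := by
  induction x using TensorProduct.induction_on with
  | zero => simp
  | tmul a b =>
    induction y using TensorProduct.induction_on with
    | zero => simp
    | tmul c d => simp [tmul2]
    | add x y hx hy => simp only [map_add, LinearMap.add_apply, hx, hy]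
  | add x y hx hy => simp only [map_add, LinearMap.add_apply, hx, hy]

lemma rCoaction_tmul (g h : H) :
    D.rCoaction (g ⊗ₜ h) = (TensorProduct.mk k H H g).rTensor H (D.comul h) := by
  simp [rCoaction, assoc_symm_tmul_eq_rTensor_mk]

lemma rTensor_idCounit_rCoaction (z : H ⊗[k] H) : D.idCounit.rTensor H (D.rCoaction z) = z := by
  induction z using TensorProduct.induction_on with
  | zero => simp
  | tmul g h =>
    have hmk (y : H ⊗[k] H) :
        (D.idCounit ∘ₗ TensorProduct.mk k H H g).rTensor H y = g ⊗ₜ D.counitId y := by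
      induction y using TensorProduct.induction_on with
      | zero => simp
      | tmul a b => simp [smul_tmul]
      | add x y hx hy => simp only [map_add, tmul_add, hx, hy]
    rw [rCoaction_tmul, ← LinearMap.rTensor_comp_apply, hmk, counitId_comul]
  | add x y hx hy => simp only [map_add, hx, hy]

lemma rCoaction_rTensor (f : H →ₗ[k] H) (z : H ⊗[k] H) :
    D.rCoaction (f.rTensor H z) = (f.rTensor H).rTensor H (D.rCoaction z) := by
  induction z using TensorProduct.induction_on with
  | zero => simp
  | tmul a b =>
    rw [LinearMap.rTensor_tmul, rCoaction_tmul, rCoaction_tmul, ← LinearMap.rTensor_comp_apply]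
    rfl
  | add x y hx hy => simp only [map_add, hx, hy]

lemma rCoaction_comul (hΔ : D.IsCoassoc) (h : H) :
    D.rCoaction (D.comul h) = D.comul.rTensor H (D.comul h) := by
  rw [rCoaction, LinearMap.comp_apply, LinearMap.lTensor, ← hΔ h]
  exact (TensorProduct.assoc k H H H).symm_apply_apply _

lemma rCoaction_comp_rGalois (hΔ : D.IsCoassoc) :
    D.rCoaction ∘ₗ D.rGalois = D.rGalois.rTensor H ∘ₗ D.rCoaction := by
  have hmk (g : H) : D.rGalois ∘ₗ TensorProduct.mk k H H g = (D.mul g).rTensor H ∘ₗ D.comul :=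
    LinearMap.ext (D.rGalois_tmul g)
  refine TensorProduct.ext' fun g h => ?_
  simp only [LinearMap.comp_apply]
  rw [rGalois_tmul, rCoaction_rTensor, rCoaction_comul D hΔ, rCoaction_tmul,
    ← LinearMap.rTensor_comp_apply, ← LinearMap.rTensor_comp_apply, hmk]

lemma idCounit_comp_rGalois : D.idCounit ∘ₗ D.rGalois = D.mulMap :=
  TensorProduct.ext' fun g h => by
    rw [LinearMap.comp_apply, rGalois_tmul, idCounit_rTensor, idCounit_comul]
    rfl

section RightGalois

variable {D} {βinv : H ⊗[k] H →ₗ[k] H ⊗[k] H}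

lemma rCoaction_comp_betaInv (hΔ : D.IsCoassoc) (hβl : βinv ∘ₗ D.rGalois = LinearMap.id)
    (hβr : D.rGalois ∘ₗ βinv = LinearMap.id) :
    D.rCoaction ∘ₗ βinv = βinv.rTensor H ∘ₗ D.rCoaction :=
  calc D.rCoaction ∘ₗ βinv
      = (βinv.rTensor H ∘ₗ D.rGalois.rTensor H) ∘ₗ D.rCoaction ∘ₗ βinv := by
        rw [← LinearMap.rTensor_comp, hβl, LinearMap.rTensor_id, LinearMap.id_comp]
    _ = βinv.rTensor H ∘ₗ (D.rCoaction ∘ₗ D.rGalois) ∘ₗ βinv := by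
        rw [rCoaction_comp_rGalois D hΔ]
        rfl
    _ = βinv.rTensor H ∘ₗ D.rCoaction := by
        rw [LinearMap.comp_assoc, hβr, LinearMap.comp_id]

lemma betaInv_one_tmul (hΔ : D.IsCoassoc) (hβl : βinv ∘ₗ D.rGalois = LinearMap.id)
    (hβr : D.rGalois ∘ₗ βinv = LinearMap.id) (h : H) :
    βinv (D.one ⊗ₜ h) = (D.antipodeOf βinv).rTensor H (D.comul h) :=
  calc βinv (D.one ⊗ₜ h)
      = D.idCounit.rTensor H (D.rCoaction (βinv (D.one ⊗ₜ h))) :=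
        (D.rTensor_idCounit_rCoaction _).symm
    _ = D.idCounit.rTensor H (βinv.rTensor H (D.rCoaction (D.one ⊗ₜ h))) := by
        rw [← LinearMap.comp_apply D.rCoaction, rCoaction_comp_betaInv hΔ hβl hβr]
        rfl
    _ = (D.antipodeOf βinv).rTensor H (D.comul h) := by
        rw [rCoaction_tmul, ← LinearMap.rTensor_comp_apply, ← LinearMap.rTensor_comp_apply]
        rfl

lemma betaInv_eq_betaInvOf (hΔ : D.IsCoassoc) (hβl : βinv ∘ₗ D.rGalois = LinearMap.id)
    (hβr : D.rGalois ∘ₗ βinv = LinearMap.id) (hβ : D.AlmostLeftLinear βinv) :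
    βinv = D.betaInvOf (D.antipodeOf βinv) :=
  TensorProduct.ext' fun g h => by
    rw [hβ, betaInv_one_tmul hΔ hβl hβr, tmul2_tmul_one, betaInvOf_tmul,
      LinearMap.rTensor_comp_apply]

lemma idCounit_comp_betaInv (hΔ : D.IsCoassoc) (hβl : βinv ∘ₗ D.rGalois = LinearMap.id)
    (hβr : D.rGalois ∘ₗ βinv = LinearMap.id) (hβ : D.AlmostLeftLinear βinv) :
    D.idCounit ∘ₗ βinv = D.mulMap ∘ₗ (D.antipodeOf βinv).lTensor H := by
  nth_rewrite 1 [betaInv_eq_betaInvOf hΔ hβl hβr hβ]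
  refine TensorProduct.ext' fun g h => ?_
  rw [LinearMap.comp_apply, betaInvOf_tmul, idCounit_rTensor, idCounit_comul]
  rfl

theorem isRightAntipode_antipodeOf (hΔ : D.IsCoassoc) (hβl : βinv ∘ₗ D.rGalois = LinearMap.id)
    (hβr : D.rGalois ∘ₗ βinv = LinearMap.id) (hβ : D.AlmostLeftLinear βinv) :
    D.IsRightAntipode (D.antipodeOf βinv) := by
  constructor
  · intro g h
    calc _ = D.mulMap ((D.antipodeOf βinv).lTensor H (D.rGalois (g ⊗ₜ h))) := by
          rw [rGalois, LinearMap.comp_apply, LinearMap.lTensor, TensorProduct.map_map,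
            LinearMap.id_comp, LinearMap.comp_id]
          rfl
      _ = D.idCounit (βinv (D.rGalois (g ⊗ₜ h))) := by
          rw [← LinearMap.comp_apply D.mulMap, ← idCounit_comp_betaInv hΔ hβl hβr hβ]
          rfl
      _ = D.counit h • g := by
          rw [← LinearMap.comp_apply βinv, hβl]
          rfl
  · intro g h
    calc _ = D.mulMap (βinv (g ⊗ₜ h)) :=
          congrArg D.mulMap (LinearMap.congr_fun (betaInv_eq_betaInvOf hΔ hβl hβr hβ) _).symm
      _ = D.counit h • g := by
          rw [← D.idCounit_comp_rGalois, LinearMap.comp_apply, ← LinearMap.comp_apply D.rGalois,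
            hβr]
          rfl

end RightGalois

theorem eq_of_isLeftAntipode_of_isRightAntipode (hΔ : D.IsCoassoc) {S' S : H →ₗ[k] H}
    (hS' : D.IsLeftAntipode S') (hS : D.IsRightAntipode S) : S' = S := by
  -- `F` on `h₍₁₎ ⊗ h₍₂₎ ⊗ h₍₃₎` is `S' h` when `h₍₂₎ ⊗ h₍₃₎` is contracted first, `S h` otherwise
  let F : H ⊗[k] (H ⊗[k] H) →ₗ[k] H :=
    D.mulMap ∘ₗ TensorProduct.map S' (D.mulMap ∘ₗ S.lTensor H)
  have hcomul_S (b : H) : D.mulMap (S.lTensor H (D.comul b)) = D.counit b • D.one := by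
    rw [← hS.1 D.one b]
    induction D.comul b using TensorProduct.induction_on with
    | zero => simp
    | tmul a c => simp [D.one_mul]
    | add x y hx hy => simp only [map_add, tmul_add, hx, hy]
  have hleft : F ∘ₗ D.comul.lTensor H = S' ∘ₗ D.idCounit :=
    TensorProduct.ext' fun a b => by simp [F, hcomul_S, D.mul_one]
  have hright : F ∘ₗ (TensorProduct.assoc k H H H).toLinearMap ∘ₗ D.comul.rTensor H =
      S ∘ₗ D.counitId :=
    TensorProduct.ext' fun a c => by
      simp only [F, LinearMap.comp_apply, LinearEquiv.coe_coe, LinearMap.rTensor_tmul,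
        counitId_tmul, map_smul]
      rw [← hS'.1 a (S c)]
      induction D.comul a using TensorProduct.induction_on with
      | zero => simp
      | tmul x y => simp
      | add x y hx hy => simp only [map_add, add_tmul, hx, hy]
  ext h
  calc S' h = S' (D.idCounit (D.comul h)) := by rw [idCounit_comul]
    _ = F (D.comul.lTensor H (D.comul h)) := (LinearMap.congr_fun hleft _).symm
    _ = F (TensorProduct.assoc k H H H (D.comul.rTensor H (D.comul h))) := by
        rw [LinearMap.lTensor, ← hΔ h]
        rfl
    _ = S (D.counitId (D.comul h)) := LinearMap.congr_fun hright _
    _ = S h := by rw [counitId_comul]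

def opCop : BialgQ k H where
  mul := D.mul.flip
  one := D.one
  comul := (TensorProduct.comm k H H).toLinearMap ∘ₗ D.comul
  counit := D.counit
  one_mul := D.mul_one
  mul_one := D.one_mul
  counit_comul h := (D.counitId_comm (D.comul h)).trans (D.idCounit_comul h)
  comul_counit h := (D.idCounit_comm (D.comul h)).trans (D.counitId_comul h)
  comul_mul g h := by simp [D.comul_mul, comm_tmul2]
  comul_one := by simp [D.comul_one]
  counit_mul g h := by simp [D.counit_mul, mul_comm]
  counit_one := D.counit_one

lemma IsCoassoc.opCop (hΔ : D.IsCoassoc) : D.opCop.IsCoassoc := by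
  -- both sides are the two sides of coassociativity with the tensor factors reversed
  have hrev : (TensorProduct.assoc k H H H).toLinearMap ∘ₗ
        (TensorProduct.comm k H H).toLinearMap.rTensor H ∘ₗ
        (TensorProduct.comm k H (H ⊗[k] H)).toLinearMap ∘ₗ
        (TensorProduct.assoc k H H H).toLinearMap =
      (TensorProduct.comm k H H).toLinearMap.lTensor H ∘ₗ
        (TensorProduct.comm k (H ⊗[k] H) H).toLinearMap :=
    TensorProduct.ext_threefold fun _ _ _ => rfl
  intro h
  change TensorProduct.assoc k H H H
      (((TensorProduct.comm k H H).toLinearMap ∘ₗ D.comul).rTensor H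
        (TensorProduct.comm k H H (D.comul h))) =
    ((TensorProduct.comm k H H).toLinearMap ∘ₗ D.comul).lTensor H
      (TensorProduct.comm k H H (D.comul h))
  rw [LinearMap.rTensor_comp_apply, LinearMap.lTensor_comp_apply, LinearMap.rTensor_comm,
    LinearMap.lTensor_comm, LinearMap.lTensor, ← hΔ h]
  exact LinearMap.congr_fun hrev _

lemma opCop_rGalois :
    D.opCop.rGalois = (TensorProduct.comm k H H).toLinearMap ∘ₗ D.lGalois ∘ₗ
      (TensorProduct.comm k H H).toLinearMap :=
  TensorProduct.ext' fun g h => by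
    rw [rGalois_tmul]
    simp only [LinearMap.comp_apply, LinearEquiv.coe_coe, TensorProduct.comm_tmul, lGalois_tmul]
    exact LinearMap.rTensor_comm _ _

lemma AlmostRightLinear.opCop {γinv : H ⊗[k] H →ₗ[k] H ⊗[k] H}
    (hγ : D.AlmostRightLinear γinv) :
    D.opCop.AlmostLeftLinear ((TensorProduct.comm k H H).toLinearMap ∘ₗ γinv ∘ₗ
      (TensorProduct.comm k H H).toLinearMap) := by
  intro g h
  simp only [LinearMap.comp_apply, LinearEquiv.coe_coe, TensorProduct.comm_tmul, hγ h g,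
    comm_tmul2]
  rfl

lemma IsLeftAntipode.of_opCop {S : H →ₗ[k] H} (hS : D.opCop.IsRightAntipode S) :
    D.IsLeftAntipode S := by
  refine ⟨fun h g => Eq.trans ?_ (hS.1 g h), fun h g => Eq.trans ?_ (hS.2 g h)⟩ <;>
  · change _ = TensorProduct.lift D.mul.flip _
    simp only [opCop, LinearMap.comp_apply, LinearEquiv.coe_coe]
    induction D.comul h using TensorProduct.induction_on with
    | zero => simp
    | tmul a b => simp
    | add x y hx hy => simp only [map_add, add_tmul, tmul_add, hx, hy]

theorem isLeftAntipode_opCop_antipodeOf (hΔ : D.IsCoassoc) {γinv : H ⊗[k] H →ₗ[k] H ⊗[k] H}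
    (hγl : γinv ∘ₗ D.lGalois = LinearMap.id) (hγr : D.lGalois ∘ₗ γinv = LinearMap.id)
    (hγ : D.AlmostRightLinear γinv) :
    D.IsLeftAntipode (D.opCop.antipodeOf ((TensorProduct.comm k H H).toLinearMap ∘ₗ γinv ∘ₗ
      (TensorProduct.comm k H H).toLinearMap)) := by
  refine IsLeftAntipode.of_opCop D (isRightAntipode_antipodeOf hΔ.opCop ?_ ?_ hγ.opCop)
  · rw [opCop_rGalois, LinearMap.comp_assoc, LinearMap.comp_assoc,
      TensorProduct.comm_comp_comm_assoc, ← LinearMap.comp_assoc _ D.lGalois γinv, hγl,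
      LinearMap.id_comp, TensorProduct.comm_comp_comm]
  · rw [opCop_rGalois, LinearMap.comp_assoc, LinearMap.comp_assoc,
      TensorProduct.comm_comp_comm_assoc, ← LinearMap.comp_assoc _ γinv D.lGalois, hγr,
      LinearMap.id_comp, TensorProduct.comm_comp_comm]

end BialgQ

/-- If `Δ` is coassociative and the right (resp. left) Galois map has an almost
left (resp. right) `H`-linear inverse, then `H` is a Hopf quasigroup: the map
`S h = (id ⊗ ε)(β⁻¹(1 ⊗ h))` satisfies `(S h₍₁₎)(h₍₂₎ g) = ε(h) g = h₍₁₎((S h₍₂₎) g)` and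
`(g h₍₁₎) S h₍₂₎ = ε(h) g = (g S h₍₁₎) h₍₂₎`. -/
theorem stmt5 {k : Type*} [Field k] {H : Type*} [AddCommGroup H] [Module k H]
    (D : BialgQ k H)
    (coassoc : ∀ h, TensorProduct.assoc k H H H
        (TensorProduct.map D.comul LinearMap.id (D.comul h)) =
      TensorProduct.map LinearMap.id D.comul (D.comul h))
    (βinv : H ⊗[k] H →ₗ[k] H ⊗[k] H)
    (hβl : βinv.comp D.rGalois = LinearMap.id)
    (hβr : D.rGalois.comp βinv = LinearMap.id)
    (hβ : D.AlmostLeftLinear βinv)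
    (γinv : H ⊗[k] H →ₗ[k] H ⊗[k] H)
    (hγl : γinv.comp D.lGalois = LinearMap.id)
    (hγr : D.lGalois.comp γinv = LinearMap.id)
    (hγ : D.AlmostRightLinear γinv) :
    (∀ h g, TensorProduct.lift D.mul
        (TensorProduct.map (D.antipodeOf βinv) (TensorProduct.lift D.mul)
          (TensorProduct.assoc k H H H (D.comul h ⊗ₜ[k] g))) = D.counit h • g) ∧
    (∀ h g, TensorProduct.lift D.mul
        (TensorProduct.map LinearMap.id
          ((TensorProduct.lift D.mul).comp (TensorProduct.map (D.antipodeOf βinv) LinearMap.id))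
          (TensorProduct.assoc k H H H (D.comul h ⊗ₜ[k] g))) = D.counit h • g) ∧
    (∀ g h, TensorProduct.lift D.mul
        (TensorProduct.map (TensorProduct.lift D.mul) (D.antipodeOf βinv)
          ((TensorProduct.assoc k H H H).symm (g ⊗ₜ[k] D.comul h))) = D.counit h • g) ∧
    (∀ g h, TensorProduct.lift D.mul
        (TensorProduct.map
          ((TensorProduct.lift D.mul).comp (TensorProduct.map LinearMap.id (D.antipodeOf βinv)))
          LinearMap.id
          ((TensorProduct.assoc k H H H).symm (g ⊗ₜ[k] D.comul h))) = D.counit h • g) := by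
  have hright := D.isRightAntipode_antipodeOf coassoc hβl hβr hβ
  have hleft := D.isLeftAntipode_opCop_antipodeOf coassoc hγl hγr hγ
  rw [D.eq_of_isLeftAntipode_of_isRightAntipode coassoc hleft hright] at hleft
  exact ⟨hleft.1, hleft.2, hright.1, hright.2⟩
end
end

section
/- Let H be a Hopf coquasigroup with antipode S. Then the right Galois map β : g⊗h ↦ gh₍₁₎⊗h₍₂₎ is bijective with inverse g⊗h ↦ gSh₍₁₎ ⊗ h₍₂₎, which is almost right H-colinear (i.e. β⁻¹(g⊗h) = (id⊗ε)(β⁻¹(g⊗h₍₁₎)) ⊗ h₍₂₎), and the left Galois map γ : g⊗h ↦ g₍₁₎⊗g₍₂₎h is bijective with inverse g⊗h ↦ g₍₁₎ ⊗ (Sg₍₂₎)h, which is almost left H-colinear (i.e. γ⁻¹(g⊗h) = g₍₁₎ ⊗ (ε⊗id)(γ⁻¹(g₍₂₎⊗h))). -/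
/-!
Write `β_T (g ⊗ h) = g T(h₍₁₎) ⊗ h₍₂₎`, so that `β = β_id` and the claimed inverse is `β_S`.
By associativity every `β_T` commutes with left multiplication on the first tensor factor,
and `g ⊗ h = (g ⊗ 1)(1 ⊗ h)`; hence `β_S β = id = β β_S` need only be checked on `1 ⊗ h`,
where they are exactly the first two coantipode axioms. The left Galois map is handled
symmetrically through `γ_T (g ⊗ h) = g₍₁₎ ⊗ T(g₍₂₎) h`, right multiplication on the second
factor and the last two axioms. Almost colinearity of `β_T` and `γ_T` only uses the counit laws.
-/

open TensorProduct

noncomputable section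

namespace BialgQ

variable {k : Type*} [Field k] {H : Type*} [AddCommGroup H] [Module k H] (D : BialgQ k H)

lemma ext_of_commute_mul_left {φ ψ : H ⊗[k] H →ₗ[k] H ⊗[k] H}
    (hφ : ∀ a x, φ (map (D.mul a) LinearMap.id x) = map (D.mul a) LinearMap.id (φ x))
    (hψ : ∀ a x, ψ (map (D.mul a) LinearMap.id x) = map (D.mul a) LinearMap.id (ψ x))
    (hone : ∀ h, φ (D.one ⊗ₜ h) = ψ (D.one ⊗ₜ h)) : φ = ψ := by
  refine TensorProduct.ext' fun g h => ?_
  have hgh : g ⊗ₜ[k] h = map (D.mul g) LinearMap.id (D.one ⊗ₜ h) := by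
    simp [D.mul_one]
  rw [hgh, hφ, hψ, hone]

lemma ext_of_commute_mul_right {φ ψ : H ⊗[k] H →ₗ[k] H ⊗[k] H}
    (hφ : ∀ a x, φ (map LinearMap.id (D.mul.flip a) x) = map LinearMap.id (D.mul.flip a) (φ x))
    (hψ : ∀ a x, ψ (map LinearMap.id (D.mul.flip a) x) = map LinearMap.id (D.mul.flip a) (ψ x))
    (hone : ∀ g, φ (g ⊗ₜ D.one) = ψ (g ⊗ₜ D.one)) : φ = ψ := by
  refine TensorProduct.ext' fun g h => ?_
  have hgh : g ⊗ₜ[k] h = map LinearMap.id (D.mul.flip h) (g ⊗ₜ D.one) := by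
    simp [D.one_mul]
  rw [hgh, hφ, hψ, hone]

lemma rGalois_eq_betaInvOf_id : D.rGalois = D.betaInvOf LinearMap.id := by
  simp [rGalois, betaInvOf, map_id]

lemma lGalois_eq_gammaInvOf_id : D.lGalois = D.gammaInvOf LinearMap.id := by
  simp [lGalois, gammaInvOf, map_id]

lemma betaInvOf_one_tmul (T : H →ₗ[k] H) (h : H) :
    D.betaInvOf T (D.one ⊗ₜ h) = map T LinearMap.id (D.comul h) := by
  simp only [betaInvOf, LinearMap.comp_apply, map_tmul, LinearMap.id_coe, id_eq]
  induction D.comul h using TensorProduct.induction_on with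
  | zero => simp
  | add x y hx hy => simp only [tmul_add, map_add, hx, hy]
  | tmul b c => simp [mulMap, D.one_mul]

lemma gammaInvOf_tmul_one (T : H →ₗ[k] H) (g : H) :
    D.gammaInvOf T (g ⊗ₜ D.one) = map LinearMap.id T (D.comul g) := by
  simp only [gammaInvOf, LinearMap.comp_apply, map_tmul, LinearMap.id_coe, id_eq]
  induction D.comul g using TensorProduct.induction_on with
  | zero => simp
  | add x y hx hy => simp only [add_tmul, map_add, hx, hy]
  | tmul b c => simp [mulMap, D.mul_one]

lemma rGalois_map_left (T : H →ₗ[k] H) (t : H ⊗[k] H) :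
    D.rGalois (map T LinearMap.id t) =
      map (D.mulMap.comp (map T LinearMap.id)) LinearMap.id
        ((TensorProduct.assoc k H H H).symm (map LinearMap.id D.comul t)) := by
  induction t using TensorProduct.induction_on with
  | zero => simp
  | add x y hx hy => simp only [map_add, hx, hy]
  | tmul a b =>
    simp only [rGalois, LinearMap.comp_apply, map_tmul, LinearMap.id_coe, id_eq]
    induction D.comul b using TensorProduct.induction_on with
    | zero => simp
    | add x y hx hy => simp only [tmul_add, map_add, hx, hy]
    | tmul c d => simp

lemma lGalois_map_right (T : H →ₗ[k] H) (t : H ⊗[k] H) :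
    D.lGalois (map LinearMap.id T t) =
      map LinearMap.id (D.mulMap.comp (map LinearMap.id T))
        (TensorProduct.assoc k H H H (map D.comul LinearMap.id t)) := by
  induction t using TensorProduct.induction_on with
  | zero => simp
  | add x y hx hy => simp only [map_add, hx, hy]
  | tmul a b =>
    simp only [lGalois, LinearMap.comp_apply, map_tmul, LinearMap.id_coe, id_eq]
    induction D.comul a using TensorProduct.induction_on with
    | zero => simp
    | add x y hx hy => simp only [add_tmul, map_add, hx, hy]
    | tmul c d => simp

lemma betaInvOf_map_mul_left (hassoc : ∀ g h l, D.mul (D.mul g h) l = D.mul g (D.mul h l))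
    (T : H →ₗ[k] H) (a : H) (x : H ⊗[k] H) :
    D.betaInvOf T (map (D.mul a) LinearMap.id x) =
      map (D.mul a) LinearMap.id (D.betaInvOf T x) := by
  induction x using TensorProduct.induction_on with
  | zero => simp
  | add x y hx hy => simp only [map_add, hx, hy]
  | tmul g h =>
    simp only [betaInvOf, LinearMap.comp_apply, map_tmul, LinearMap.id_coe, id_eq]
    induction D.comul h using TensorProduct.induction_on with
    | zero => simp
    | add x y hx hy => simp only [tmul_add, map_add, hx, hy]
    | tmul b c => simp [mulMap, hassoc]

lemma gammaInvOf_map_mul_right (hassoc : ∀ g h l, D.mul (D.mul g h) l = D.mul g (D.mul h l))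
    (T : H →ₗ[k] H) (a : H) (x : H ⊗[k] H) :
    D.gammaInvOf T (map LinearMap.id (D.mul.flip a) x) =
      map LinearMap.id (D.mul.flip a) (D.gammaInvOf T x) := by
  induction x using TensorProduct.induction_on with
  | zero => simp
  | add x y hx hy => simp only [map_add, hx, hy]
  | tmul g h =>
    simp only [gammaInvOf, LinearMap.comp_apply, map_tmul, LinearMap.id_coe, id_eq]
    induction D.comul g using TensorProduct.induction_on with
    | zero => simp
    | add x y hx hy => simp only [add_tmul, map_add, hx, hy]
    | tmul b c => simp [mulMap, hassoc]

lemma rid_counit_betaInvOf (T : H →ₗ[k] H) (g a : H) :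
    TensorProduct.rid k H (map LinearMap.id D.counit (D.betaInvOf T (g ⊗ₜ a))) =
      D.mul g (T a) := by
  conv_rhs => rw [← D.comul_counit a]
  simp only [betaInvOf, LinearMap.comp_apply, map_tmul, LinearMap.id_coe, id_eq]
  induction D.comul a using TensorProduct.induction_on with
  | zero => simp
  | add x y hx hy => simp only [tmul_add, map_add, hx, hy]
  | tmul b c => simp [mulMap]

lemma lid_counit_gammaInvOf (T : H →ₗ[k] H) (g h : H) :
    TensorProduct.lid k H (map D.counit LinearMap.id (D.gammaInvOf T (g ⊗ₜ h))) =
      D.mul (T g) h := by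
  conv_rhs => rw [← D.counit_comul g]
  simp only [gammaInvOf, LinearMap.comp_apply, map_tmul, LinearMap.id_coe, id_eq]
  induction D.comul g using TensorProduct.induction_on with
  | zero => simp
  | add x y hx hy => simp only [add_tmul, map_add, LinearMap.add_apply, hx, hy]
  | tmul b c => simp [mulMap]

lemma almostRightColinear_betaInvOf (T : H →ₗ[k] H) :
    D.AlmostRightColinear (D.betaInvOf T) := by
  intro g h
  conv_lhs => simp only [betaInvOf, LinearMap.comp_apply, map_tmul, LinearMap.id_coe, id_eq]
  induction D.comul h using TensorProduct.induction_on with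
  | zero => simp
  | add x y hx hy => simp only [tmul_add, map_add, hx, hy]
  | tmul b c => simp [D.rid_counit_betaInvOf, mulMap]

lemma almostLeftColinear_gammaInvOf (T : H →ₗ[k] H) :
    D.AlmostLeftColinear (D.gammaInvOf T) := by
  intro g h
  conv_lhs => simp only [gammaInvOf, LinearMap.comp_apply, map_tmul, LinearMap.id_coe, id_eq]
  induction D.comul g using TensorProduct.induction_on with
  | zero => simp
  | add x y hx hy => simp only [add_tmul, map_add, hx, hy]
  | tmul b c => simp [D.lid_counit_gammaInvOf, mulMap]

end BialgQ

namespace HopfCoquasigroup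

variable {k : Type*} [Field k] {H : Type*} [AddCommGroup H] [Module k H]
  (Q : HopfCoquasigroup k H)

lemma rGalois_one_tmul (h : H) : Q.rGalois (Q.one ⊗ₜ h) = Q.comul h := by
  simp [BialgQ.rGalois_eq_betaInvOf_id, BialgQ.betaInvOf_one_tmul, map_id]

lemma lGalois_tmul_one (g : H) : Q.lGalois (g ⊗ₜ Q.one) = Q.comul g := by
  simp [BialgQ.lGalois_eq_gammaInvOf_id, BialgQ.gammaInvOf_tmul_one, map_id]

lemma betaInvOf_comp_rGalois : (Q.betaInvOf Q.S).comp Q.rGalois = LinearMap.id := by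
  refine Q.ext_of_commute_mul_left (fun a x => ?_) (fun a x => rfl) (fun h => ?_)
  · simp only [LinearMap.comp_apply, BialgQ.rGalois_eq_betaInvOf_id,
      BialgQ.betaInvOf_map_mul_left _ Q.mul_assoc]
  · rw [LinearMap.comp_apply, rGalois_one_tmul]
    exact Q.coantipode₂ h

lemma rGalois_comp_betaInvOf : Q.rGalois.comp (Q.betaInvOf Q.S) = LinearMap.id := by
  refine Q.ext_of_commute_mul_left (fun a x => ?_) (fun a x => rfl) (fun h => ?_)
  · simp only [LinearMap.comp_apply, BialgQ.rGalois_eq_betaInvOf_id,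
      BialgQ.betaInvOf_map_mul_left _ Q.mul_assoc]
  · rw [LinearMap.comp_apply, BialgQ.betaInvOf_one_tmul, BialgQ.rGalois_map_left]
    exact Q.coantipode₁ h

lemma gammaInvOf_comp_lGalois : (Q.gammaInvOf Q.S).comp Q.lGalois = LinearMap.id := by
  refine Q.ext_of_commute_mul_right (fun a x => ?_) (fun a x => rfl) (fun g => ?_)
  · simp only [LinearMap.comp_apply, BialgQ.lGalois_eq_gammaInvOf_id,
      BialgQ.gammaInvOf_map_mul_right _ Q.mul_assoc]
  · rw [LinearMap.comp_apply, lGalois_tmul_one]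
    exact Q.coantipode₄ g

lemma lGalois_comp_gammaInvOf : Q.lGalois.comp (Q.gammaInvOf Q.S) = LinearMap.id := by
  refine Q.ext_of_commute_mul_right (fun a x => ?_) (fun a x => rfl) (fun g => ?_)
  · simp only [LinearMap.comp_apply, BialgQ.lGalois_eq_gammaInvOf_id,
      BialgQ.gammaInvOf_map_mul_right _ Q.mul_assoc]
  · rw [LinearMap.comp_apply, BialgQ.gammaInvOf_tmul_one, BialgQ.lGalois_map_right]
    exact Q.coantipode₃ g

end HopfCoquasigroup

/-- For a Hopf coquasigroup, the right Galois map `β` is bijective with inverse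
`g ⊗ h ↦ g S(h₍₁₎) ⊗ h₍₂₎`, which is almost right `H`-colinear, and the left Galois map `γ`
is bijective with inverse `g ⊗ h ↦ g₍₁₎ ⊗ (S g₍₂₎) h`, which is almost left `H`-colinear. -/
theorem stmt6 {k : Type*} [Field k] {H : Type*} [AddCommGroup H] [Module k H]
    (Q : HopfCoquasigroup k H) :
    (Function.Bijective ⇑Q.toBialgQ.rGalois ∧
      (Q.toBialgQ.betaInvOf Q.S).comp Q.toBialgQ.rGalois = LinearMap.id ∧
      Q.toBialgQ.rGalois.comp (Q.toBialgQ.betaInvOf Q.S) = LinearMap.id ∧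
      Q.toBialgQ.AlmostRightColinear (Q.toBialgQ.betaInvOf Q.S)) ∧
    (Function.Bijective ⇑Q.toBialgQ.lGalois ∧
      (Q.toBialgQ.gammaInvOf Q.S).comp Q.toBialgQ.lGalois = LinearMap.id ∧
      Q.toBialgQ.lGalois.comp (Q.toBialgQ.gammaInvOf Q.S) = LinearMap.id ∧
      Q.toBialgQ.AlmostLeftColinear (Q.toBialgQ.gammaInvOf Q.S)) := by
  let β : (H ⊗[k] H) ≃ₗ[k] H ⊗[k] H :=
    .ofLinearMap _ _ Q.rGalois_comp_betaInvOf Q.betaInvOf_comp_rGalois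
  let γ : (H ⊗[k] H) ≃ₗ[k] H ⊗[k] H :=
    .ofLinearMap _ _ Q.lGalois_comp_gammaInvOf Q.gammaInvOf_comp_lGalois
  exact ⟨⟨β.bijective, Q.betaInvOf_comp_rGalois, Q.rGalois_comp_betaInvOf,
      Q.almostRightColinear_betaInvOf Q.S⟩,
    ⟨γ.bijective, Q.gammaInvOf_comp_lGalois, Q.lGalois_comp_gammaInvOf,
      Q.almostLeftColinear_gammaInvOf Q.S⟩⟩
end
end

section
/- Let H be a Hopf quasigroup and M a right H-Hopf module. Then for all m ∈ M and h ∈ H: ρ(m₍₀₎·Sm₍₁₎) = m₍₀₎·Sm₍₁₎ ⊗ 1, and consequently ρ((m₍₀₎·Sm₍₁₎)·h) = (m₍₀₎·Sm₍₁₎)·h₍₁₎ ⊗ h₍₂₎. -/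
open TensorProduct

noncomputable section

/-! The key identity is `(S h₍₂₎)₍₁₎ ⊗ h₍₁₎ (S h₍₂₎)₍₂₎ = S h ⊗ 1`. Both sides are evaluations of
`S h₍₁₎ (h₍₂₎ (S h₍₄₎)₍₁₎) ⊗ h₍₃₎ (S h₍₄₎)₍₂₎`: grouping `h₍₁₎ ⊗ h₍₂₎` and using
`(S a₍₁₎)(a₍₂₎ g) = ε(a) g` gives the left side, while grouping `h₍₂₎ ⊗ h₍₃₎`, multiplicativity of
`Δ` turns the middle into `Δ(c₍₁₎ S c₍₂₎) = ε(c) 1 ⊗ 1`, which gives the right side.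
The compatibility `ρ(m·h) = m₍₀₎·h₍₁₎ ⊗ m₍₁₎h₍₂₎` and coassociativity of `ρ` turn
`ρ(m₍₀₎·S m₍₁₎)` into `m₍₀₎·(S m₍₂₎)₍₁₎ ⊗ m₍₁₎(S m₍₂₎)₍₂₎`, so `m₍₀₎·S m₍₁₎` is coinvariant by the
key identity, and for a coinvariant `n` the compatibility reads `ρ(n·h) = n·h₍₁₎ ⊗ h₍₂₎`. -/

namespace HopfQuasigroup

variable {k : Type*} [Field k] {H : Type*} [AddCommGroup H] [Module k H]
  (Q : HopfQuasigroup k H)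

def mulFst : H ⊗[k] (H ⊗[k] H) →ₗ[k] H ⊗[k] H :=
  map (lift Q.mul) LinearMap.id ∘ₗ (TensorProduct.assoc k H H H).symm.toLinearMap

@[simp]
lemma mulFst_tmul (a b c : H) : Q.mulFst (a ⊗ₜ[k] (b ⊗ₜ[k] c)) = Q.mul a b ⊗ₜ[k] c := rfl

def twist : H ⊗[k] H →ₗ[k] H ⊗[k] H :=
  lift ((tmul2 k H Q.mul ∘ₗ TensorProduct.mk k H H Q.one).compl₂ (Q.comul ∘ₗ Q.S))

@[simp]
lemma twist_tmul (g h : H) :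
    Q.twist (g ⊗ₜ[k] h) = tmul2 k H Q.mul (Q.one ⊗ₜ[k] g) (Q.comul (Q.S h)) := rfl

lemma lid_map_counit_comul {X : Type*} [AddCommGroup X] [Module k X] (f : H →ₗ[k] X)
    (h : H) : TensorProduct.lid k X (map Q.counit f (Q.comul h)) = f h := by
  have hf : (TensorProduct.lid k X).toLinearMap ∘ₗ map Q.counit f
      = f ∘ₗ (TensorProduct.lid k H).toLinearMap ∘ₗ map Q.counit LinearMap.id := by
    ext; simp
  simpa [Q.counit_comul] using congr($hf (Q.comul h))

lemma assoc_map_comul_map_comul (h : H) :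
    TensorProduct.assoc k H H (H ⊗[k] H)
        (map Q.comul LinearMap.id (map LinearMap.id Q.comul (Q.comul h))) =
      map LinearMap.id ((TensorProduct.assoc k H H H).toLinearMap ∘ₗ map Q.comul LinearMap.id)
        (map LinearMap.id Q.comul (Q.comul h)) := by
  have hcoassoc : map LinearMap.id Q.comul ∘ₗ Q.comul
      = (TensorProduct.assoc k H H H).toLinearMap ∘ₗ map Q.comul LinearMap.id ∘ₗ Q.comul :=
    LinearMap.ext fun h => (Q.coassoc h).symm
  calc _ = map LinearMap.id (map LinearMap.id Q.comul)
        (TensorProduct.assoc k H H H (map Q.comul LinearMap.id (Q.comul h))) := by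
        rw [map_map_assoc, map_map, map_map]
        simp only [LinearMap.comp_id, LinearMap.id_comp, map_id]
    _ = _ := by
        rw [Q.coassoc, map_map, map_map]
        simp only [LinearMap.id_comp, hcoassoc, LinearMap.comp_assoc]

lemma mul_antipode_comul (h : H) :
    lift Q.mul (map LinearMap.id Q.S (Q.comul h)) = Q.counit h • Q.one := by
  rw [← Q.antipode₃ Q.one h]
  induction Q.comul h using TensorProduct.induction_on with
  | zero => simp
  | tmul a b => simp [Q.one_mul]
  | add x y hx hy => simp only [map_add, tmul_add, hx, hy]

lemma comul_mul_antipode (x : H ⊗[k] H) :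
    Q.comul (lift Q.mul (map LinearMap.id Q.S x)) =
      Q.mulFst (map LinearMap.id Q.twist
        (TensorProduct.assoc k H H H (map Q.comul LinearMap.id x))) := by
  induction x using TensorProduct.induction_on with
  | zero => simp
  | add x y hx hy => simp only [map_add, hx, hy]
  | tmul b d =>
    simp only [map_tmul, LinearMap.id_apply, lift.tmul, Q.comul_mul]
    induction Q.comul b using TensorProduct.induction_on with
    | zero => simp
    | add x y hx hy => simp only [map_add, add_tmul, LinearMap.add_apply, hx, hy]
    | tmul b₁ b₂ =>
      simp only [assoc_tmul, map_tmul, LinearMap.id_apply, twist_tmul]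
      induction Q.comul (Q.S d) using TensorProduct.induction_on with
      | zero => simp
      | add x y hx hy => simp only [map_add, tmul_add, hx, hy]
      | tmul u v => simp [tmul2, Q.one_mul]

lemma mulFst_twist_assoc_comul_comul (c : H) :
    Q.mulFst (map LinearMap.id Q.twist
        (TensorProduct.assoc k H H H (map Q.comul LinearMap.id (Q.comul c)))) =
      Q.counit c • (Q.one ⊗ₜ[k] Q.one) := by
  rw [← Q.comul_mul_antipode, Q.mul_antipode_comul, map_smul, Q.comul_one]

lemma mulFst_map_antipode_mulFst (z : H ⊗[k] (H ⊗[k] H)) :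
    Q.mulFst (map Q.S Q.mulFst (TensorProduct.assoc k H H (H ⊗[k] H)
        (map Q.comul LinearMap.id z))) =
      TensorProduct.lid k (H ⊗[k] H) (map Q.counit LinearMap.id z) := by
  induction z using TensorProduct.induction_on with
  | zero => simp
  | add x y hx hy => simp only [map_add, hx, hy]
  | tmul a uv =>
    induction uv using TensorProduct.induction_on with
    | zero => simp
    | add x y hx hy => simp only [map_add, tmul_add, hx, hy]
    | tmul u v =>
      have hleg : ∀ x : H ⊗[k] H,
          Q.mulFst (map Q.S Q.mulFst
              (TensorProduct.assoc k H H (H ⊗[k] H) (x ⊗ₜ[k] (u ⊗ₜ[k] v)))) =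
            lift Q.mul (map Q.S (lift Q.mul) (TensorProduct.assoc k H H H (x ⊗ₜ[k] u)))
              ⊗ₜ[k] v := by
        intro x
        induction x using TensorProduct.induction_on with
        | zero => simp
        | add x y hx hy => simp only [map_add, add_tmul, hx, hy]
        | tmul a₁ a₂ => simp
      simp [hleg, Q.antipode₁, smul_tmul']

theorem twist_comul (h : H) : Q.twist (Q.comul h) = Q.S h ⊗ₜ[k] Q.one := by
  have hmid : (Q.mulFst ∘ₗ map LinearMap.id Q.twist) ∘ₗ
      ((TensorProduct.assoc k H H H).toLinearMap ∘ₗ map Q.comul LinearMap.id) ∘ₗ Q.comul =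
      Q.counit.smulRight (Q.one ⊗ₜ[k] Q.one) :=
    LinearMap.ext Q.mulFst_twist_assoc_comul_comul
  have hcomm : ∀ y : H ⊗[k] (H ⊗[k] H),
      map Q.comul LinearMap.id (map LinearMap.id Q.twist y) =
        map (map LinearMap.id LinearMap.id) Q.twist (map Q.comul LinearMap.id y) := by
    simp [map_map]
  have hcounit : ∀ x : H ⊗[k] H,
      Q.mulFst (map Q.S (Q.counit.smulRight (Q.one ⊗ₜ[k] Q.one)) x) =
        Q.S (TensorProduct.rid k H (map LinearMap.id Q.counit x)) ⊗ₜ[k] Q.one := by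
    intro x
    induction x using TensorProduct.induction_on with
    | zero => simp
    | add x y hx hy => simp only [map_add, hx, hy, add_tmul]
    | tmul a b => simp [smul_tmul', Q.mul_one]
  calc Q.twist (Q.comul h)
      = TensorProduct.lid k (H ⊗[k] H) (map Q.counit (Q.twist ∘ₗ Q.comul) (Q.comul h)) :=
        (Q.lid_map_counit_comul (Q.twist ∘ₗ Q.comul) h).symm
    _ = Q.mulFst (map Q.S Q.mulFst (TensorProduct.assoc k H H (H ⊗[k] H)
          (map Q.comul LinearMap.id
            (map LinearMap.id Q.twist (map LinearMap.id Q.comul (Q.comul h)))))) := by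
        rw [Q.mulFst_map_antipode_mulFst]
        simp only [map_map, LinearMap.comp_id, LinearMap.id_comp]
    _ = Q.mulFst (map Q.S (Q.mulFst ∘ₗ map LinearMap.id Q.twist)
          (TensorProduct.assoc k H H (H ⊗[k] H)
            (map Q.comul LinearMap.id (map LinearMap.id Q.comul (Q.comul h))))) := by
        rw [hcomm, ← map_map_assoc, map_map, LinearMap.comp_id]
    _ = Q.mulFst (map Q.S (Q.counit.smulRight (Q.one ⊗ₜ[k] Q.one)) (Q.comul h)) := by
        rw [Q.assoc_map_comul_map_comul, ← hmid]
        simp only [map_map, LinearMap.comp_id, LinearMap.comp_assoc]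
    _ = Q.S h ⊗ₜ[k] Q.one := by rw [hcounit, Q.comul_counit]

section HopfModule

variable {M : Type*} [AddCommGroup M] [Module k M] {act : M ⊗[k] H →ₗ[k] M}
  {ρ : M →ₗ[k] M ⊗[k] H}

lemma mem_coinvariants_iff {n : M} : n ∈ Q.coinvariants ρ ↔ ρ n = n ⊗ₜ[k] Q.one := by
  simp [coinvariants, sub_eq_zero]

lemma coact_act_eq
    (hcompat : ∀ m h, ρ (act (m ⊗ₜ[k] h)) =
      map act (lift Q.mul) (tensorTensorTensorComm k M H H H (ρ m ⊗ₜ[k] Q.comul h)))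
    (x : M ⊗[k] H) :
    ρ (act x) = map act (lift Q.mul) (tensorTensorTensorComm k M H H H (map ρ Q.comul x)) := by
  induction x using TensorProduct.induction_on with
  | zero => simp
  | add x y hx hy => simp only [map_add, hx, hy]
  | tmul m h => exact hcompat m h

lemma map_act_mul_comul_antipode (y : M ⊗[k] (H ⊗[k] H)) :
    map act (lift Q.mul) (tensorTensorTensorComm k M H H H
        (map LinearMap.id (Q.comul ∘ₗ Q.S) ((TensorProduct.assoc k M H H).symm y))) =
      map act LinearMap.id ((TensorProduct.assoc k M H H).symm (map LinearMap.id Q.twist y)) := by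
  induction y using TensorProduct.induction_on with
  | zero => simp
  | add x y hx hy => simp only [map_add, hx, hy]
  | tmul m gh =>
    induction gh using TensorProduct.induction_on with
    | zero => simp
    | add x y hx hy => simp only [map_add, tmul_add, hx, hy]
    | tmul g h =>
      simp only [assoc_symm_tmul, map_tmul, LinearMap.id_apply, LinearMap.comp_apply,
        twist_tmul]
      induction Q.comul (Q.S h) using TensorProduct.induction_on with
      | zero => simp
      | add x y hx hy => simp only [map_add, tmul_add, hx, hy]
      | tmul u v => simp [tmul2, Q.one_mul]

theorem act_antipode_coact_mem_coinvariants
    (hcoassoc : ∀ m, TensorProduct.assoc k M H H (map ρ LinearMap.id (ρ m)) =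
      map LinearMap.id Q.comul (ρ m))
    (hcompat : ∀ m h, ρ (act (m ⊗ₜ[k] h)) =
      map act (lift Q.mul) (tensorTensorTensorComm k M H H H (ρ m ⊗ₜ[k] Q.comul h)))
    (m : M) : act (map LinearMap.id Q.S (ρ m)) ∈ Q.coinvariants ρ := by
  have htwist : Q.twist ∘ₗ Q.comul = (TensorProduct.mk k H H).flip Q.one ∘ₗ Q.S :=
    LinearMap.ext Q.twist_comul
  have hsplit : ∀ x : M ⊗[k] H,
      map act LinearMap.id ((TensorProduct.assoc k M H H).symm
          (map LinearMap.id ((TensorProduct.mk k H H).flip Q.one ∘ₗ Q.S) x)) =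
        act (map LinearMap.id Q.S x) ⊗ₜ[k] Q.one := by
    intro x
    induction x using TensorProduct.induction_on with
    | zero => simp
    | add x y hx hy => simp only [map_add, hx, hy, add_tmul]
    | tmul n h => simp
  rw [mem_coinvariants_iff]
  calc ρ (act (map LinearMap.id Q.S (ρ m)))
      = map act (lift Q.mul) (tensorTensorTensorComm k M H H H
          (map ρ (Q.comul ∘ₗ Q.S) (ρ m))) := by
        rw [Q.coact_act_eq hcompat, map_map, LinearMap.comp_id]
    _ = map act (lift Q.mul) (tensorTensorTensorComm k M H H H
          (map LinearMap.id (Q.comul ∘ₗ Q.S)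
            ((TensorProduct.assoc k M H H).symm (map LinearMap.id Q.comul (ρ m))))) := by
        rw [← hcoassoc, LinearEquiv.symm_apply_apply, map_map, LinearMap.id_comp,
          LinearMap.comp_id]
    _ = act (map LinearMap.id Q.S (ρ m)) ⊗ₜ[k] Q.one := by
        rw [map_act_mul_comul_antipode, map_map, LinearMap.id_comp, htwist, hsplit]

theorem coact_act_of_mem_coinvariants
    (hcompat : ∀ m h, ρ (act (m ⊗ₜ[k] h)) =
      map act (lift Q.mul) (tensorTensorTensorComm k M H H H (ρ m ⊗ₜ[k] Q.comul h)))
    {n : M} (hn : n ∈ Q.coinvariants ρ) (h : H) :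
    ρ (act (n ⊗ₜ[k] h)) =
      map act LinearMap.id ((TensorProduct.assoc k M H H).symm (n ⊗ₜ[k] Q.comul h)) := by
  rw [hcompat, Q.mem_coinvariants_iff.1 hn]
  induction Q.comul h using TensorProduct.induction_on with
  | zero => simp
  | add x y hx hy => simp only [map_add, tmul_add, hx, hy]
  | tmul u v => simp [Q.one_mul]

end HopfModule

end HopfQuasigroup

/-- For a right Hopf module `M` over a Hopf quasigroup,
`ρ(m₍₀₎ · S m₍₁₎) = (m₍₀₎ · S m₍₁₎) ⊗ 1` and
`ρ((m₍₀₎ · S m₍₁₎) · h) = (m₍₀₎ · S m₍₁₎) · h₍₁₎ ⊗ h₍₂₎`. -/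
theorem stmt8 {k : Type*} [Field k] {H : Type*} [AddCommGroup H] [Module k H]
    (Q : HopfQuasigroup k H) {M : Type*} [AddCommGroup M] [Module k M]
    (act : M ⊗[k] H →ₗ[k] M) (ρ : M →ₗ[k] M ⊗[k] H)
    (hM : Q.IsHopfModule act ρ) :
    (∀ m : M, ρ (act (TensorProduct.map LinearMap.id Q.S (ρ m))) =
        act (TensorProduct.map LinearMap.id Q.S (ρ m)) ⊗ₜ[k] Q.one) ∧
    (∀ (m : M) (h : H),
        ρ (act (act (TensorProduct.map LinearMap.id Q.S (ρ m)) ⊗ₜ[k] h)) =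
        TensorProduct.map act LinearMap.id
          ((TensorProduct.assoc k M H H).symm
            (act (TensorProduct.map LinearMap.id Q.S (ρ m)) ⊗ₜ[k] Q.comul h))) := by
  obtain ⟨-, hcoassoc, -, -, -, hcompat⟩ := hM
  have hcoinv := Q.act_antipode_coact_mem_coinvariants hcoassoc hcompat
  exact ⟨fun m => Q.mem_coinvariants_iff.1 (hcoinv m),
    fun m => Q.coact_act_of_mem_coinvariants hcompat (hcoinv m)⟩
end
end
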